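/- (Inverses in the extension group; group case of the paper's Example.) Assume (Σ, ι, p) is a compatible extension of G by A. Then for every pair (σ, τ) ∈ Σ × Σ with p(σ) = p(τ) there is a unique element a(σ, τ) ∈ A with ι(a(σ, τ)) = σ·τ⁻¹, and the map h : {(σ, τ) ∈ Σ × Σ : p(σ) = p(τ)} → A ⋊ G defined by h(σ, τ) = (a(σ, τ), p(σ)) is a continuous group homomorphism (the domain carries componentwise multiplication and the subspace topology; A ⋊ G is A × G with multiplication (a₁, g₁)(a₂, g₂) = (a₁ + g₁ • a₂, g₁g₂)). Moreover h(ι(a), ι(−a')) = (a + a', 1) for all a, a' ∈ A, and the G-component of h(σ, τ) is p(σ). (Thus h exhibits A ⋊ G as the pushout of Σ ×_G Σ⁻¹ along addition, so [Σ] + [Σ⁻¹] = [SD(A, G)].) -/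

import Mathlib

open Topology

section Core

variable {G S A : Type*}

/-- The semidirect product `B ⋊ S`, where `S` acts on `B` through `p : S →* G`
and a given action of `G` on `B`.  Multiplication is
`(b₁, σ₁) * (b₂, σ₂) = (b₁ + p σ₁ • b₂, σ₁ * σ₂)`. -/
def SDP (B S : Type*) {G : Type*} [Group G] [Group S] [AddCommGroup B]
    [DistribMulAction G B] (p : S →* G) : Type _ := B × S

namespace SDP

variable {B : Type*} [Group G] [Group S] [AddCommGroup B] [DistribMulAction G B]
  (p : S →* G)

instance instGroup : Group (SDP B S p) where
  mul x y := (x.1 + p x.2 • y.1, x.2 * y.2)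
  one := ((0 : B), (1 : S))
  inv x := (-((p x.2)⁻¹ • x.1), x.2⁻¹)
  mul_assoc x y z := by
    refine Prod.ext ?_ (mul_assoc _ _ _)
    show (x.1 + p x.2 • y.1) + p (x.2 * y.2) • z.1
        = x.1 + p x.2 • (y.1 + p y.2 • z.1)
    simp [map_mul, mul_smul, smul_add, add_assoc]
  one_mul x := by
    refine Prod.ext ?_ (one_mul _)
    show (0 : B) + p 1 • x.1 = x.1
    simp
  mul_one x := by
    refine Prod.ext ?_ (mul_one _)
    show x.1 + p x.2 • (0 : B) = x.1
    simp
  inv_mul_cancel x := by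
    refine Prod.ext ?_ (inv_mul_cancel _)
    show -((p x.2)⁻¹ • x.1) + p x.2⁻¹ • x.1 = 0
    simp

instance instTopologicalSpace [TopologicalSpace B] [TopologicalSpace S] :
    TopologicalSpace (SDP B S p) :=
  instTopologicalSpaceProd

@[simp] lemma mul_def (x y : SDP B S p) :
    x * y = (x.1 + p x.2 • y.1, x.2 * y.2) := rfl

@[simp] lemma one_def : (1 : SDP B S p) = ((0 : B), (1 : S)) := rfl

@[simp] lemma inv_def (x : SDP B S p) :
    x⁻¹ = (-((p x.2)⁻¹ • x.1), x.2⁻¹) := rfl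

end SDP

/-- A compatible extension `A → S → G` of the topological group `G` by the
abelian topological group `A`, which carries an action of `G`:
`ι` is a continuous injective group homomorphism which is a homeomorphism onto
its image, `p` is a continuous open surjective homomorphism whose kernel is
exactly the image of `ι`, and conjugation in `S` induces the given action of
`G` on `A`. -/
structure IsCompatibleExtension
    [Group G] [TopologicalSpace G]
    [AddCommGroup A] [TopologicalSpace A] [DistribMulAction G A]
    [Group S] [TopologicalSpace S]
    (ι : A → S) (p : S →* G) : Prop where
  /-- The middle term is a topological group. -/
  topGroup : IsTopologicalGroup S
  /-- `ι` is a group homomorphism (from the additive group `A`). -/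
  ι_hom : ∀ a a', ι (a + a') = ι a * ι a'
  /-- `ι` is a homeomorphism onto its image (in particular continuous and
  injective). -/
  ι_embedding : IsEmbedding ι
  /-- `p` is continuous. -/
  p_cont : Continuous p
  /-- `p` is open. -/
  p_open : IsOpenMap p
  /-- `p` is surjective. -/
  p_surj : Function.Surjective p
  /-- The image of `ι` is exactly the kernel of `p`. -/
  range_ι : Set.range ι = ⇑p ⁻¹' {1}
  /-- The extension is compatible: conjugation induces the given `G`-action. -/
  compat : ∀ (σ : S) (a : A), σ * ι a * σ⁻¹ = ι (p σ • a)

end Core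

/-- Constructor for elements of `SDP B S p`. -/
def SDP.mk {G S B : Type*} [Group G] [Group S] [AddCommGroup B]
    [DistribMulAction G B] (p : S →* G) (b : B) (s : S) : SDP B S p := (b, s)

namespace MonoidHom

variable {S G : Type*} [Group S] [Group G]

def fiberProd (p : S →* G) : Subgroup (S × S) :=
  (p.comp (fst S S)).eqLocus (p.comp (snd S S))

theorem mem_fiberProd {p : S →* G} {x : S × S} : x ∈ p.fiberProd ↔ p x.1 = p x.2 :=
  Iff.rfl

theorem coe_fiberProd (p : S →* G) : (p.fiberProd : Set (S × S)) = {x | p x.1 = p x.2} :=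
  rfl

end MonoidHom

namespace IsCompatibleExtension

variable {G A S : Type*} [Group G] [TopologicalSpace G]
  [AddCommGroup A] [TopologicalSpace A] [DistribMulAction G A]
  [Group S] [TopologicalSpace S] {ι : A → S} {p : S →* G}

theorem ι_zero (hE : IsCompatibleExtension ι p) : ι 0 = 1 :=
  left_eq_mul.mp (by rw [← hE.ι_hom 0 0, add_zero])

theorem ι_neg (hE : IsCompatibleExtension ι p) (a : A) : ι (-a) = (ι a)⁻¹ :=
  eq_inv_of_mul_eq_one_left (by rw [← hE.ι_hom (-a) a, neg_add_cancel, hE.ι_zero])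

theorem p_ι (hE : IsCompatibleExtension ι p) (a : A) : p (ι a) = 1 :=
  show ι a ∈ ⇑p ⁻¹' {1} from hE.range_ι ▸ Set.mem_range_self a

theorem mul_inv_mem_range (hE : IsCompatibleExtension ι p) {x : S × S} (hx : x ∈ p.fiberProd) :
    x.1 * x.2⁻¹ ∈ Set.range ι := by
  rw [hE.range_ι, Set.mem_preimage, Set.mem_singleton_iff, map_mul_inv,
    MonoidHom.mem_fiberProd.mp hx, mul_inv_cancel]

/-- The element `a(σ, τ)` of the informal statement. -/
noncomputable def fiberDiff (hE : IsCompatibleExtension ι p) (x : p.fiberProd) : A :=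
  hE.ι_embedding.toHomeomorph.symm ⟨x.1.1 * x.1.2⁻¹, hE.mul_inv_mem_range x.2⟩

theorem ι_fiberDiff (hE : IsCompatibleExtension ι p) (x : p.fiberProd) :
    ι (hE.fiberDiff x) = x.1.1 * x.1.2⁻¹ :=
  congrArg Subtype.val (hE.ι_embedding.toHomeomorph.apply_symm_apply _)

theorem fiberDiff_eq_iff (hE : IsCompatibleExtension ι p) {x : p.fiberProd} {a : A} :
    hE.fiberDiff x = a ↔ ι a = x.1.1 * x.1.2⁻¹ := by
  rw [← hE.ι_fiberDiff x, eq_comm, hE.ι_embedding.injective.eq_iff]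

theorem continuous_fiberDiff (hE : IsCompatibleExtension ι p) : Continuous hE.fiberDiff := by
  have := hE.topGroup
  exact hE.ι_embedding.toHomeomorph.symm.continuous.comp <| Continuous.subtype_mk (by fun_prop) _

/-- As `p σ = p τ`, conjugation by `σ` and by `τ` act alike on `ι(A)`, so
`σσ'(ττ')⁻¹ = (στ⁻¹) · τ(σ'τ'⁻¹)τ⁻¹ = ι(a(σ, τ)) · ι(p σ • a(σ', τ'))`. -/
theorem fiberDiff_mul (hE : IsCompatibleExtension ι p) (x y : p.fiberProd) :
    hE.fiberDiff (x * y) = hE.fiberDiff x + p x.1.1 • hE.fiberDiff y := by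
  obtain ⟨⟨σ, τ⟩, hστ⟩ := x
  obtain ⟨⟨σ', τ'⟩, -⟩ := y
  rw [fiberDiff_eq_iff, hE.ι_hom, hE.ι_fiberDiff, MonoidHom.mem_fiberProd.mp hστ, ← hE.compat,
    hE.ι_fiberDiff]
  simp only [Subgroup.coe_mul, Prod.fst_mul, Prod.snd_mul]
  group

theorem fiberDiff_ι_ι_neg (hE : IsCompatibleExtension ι p) (a a' : A)
    (h : (ι a, ι (-a')) ∈ p.fiberProd) : hE.fiberDiff ⟨(ι a, ι (-a')), h⟩ = a + a' := by
  rw [fiberDiff_eq_iff, hE.ι_hom]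
  change ι a * ι a' = ι a * (ι (-a'))⁻¹
  rw [hE.ι_neg, inv_inv]

theorem existsUnique_ι_eq_mul_inv (hE : IsCompatibleExtension ι p) {σ τ : S} (h : p σ = p τ) :
    ∃! a : A, ι a = σ * τ⁻¹ :=
  ⟨hE.fiberDiff ⟨(σ, τ), h⟩, hE.ι_fiberDiff _, fun _ ha => (hE.fiberDiff_eq_iff.mpr ha).symm⟩

noncomputable def toSemidirect (hE : IsCompatibleExtension ι p) :
    p.fiberProd →* SDP A G (MonoidHom.id G) where
  toFun x := SDP.mk _ (hE.fiberDiff x) (p x.1.1)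
  map_one' := Prod.ext (hE.fiberDiff_eq_iff.mpr (by simp [hE.ι_zero])) (map_one p)
  map_mul' x y := Prod.ext (hE.fiberDiff_mul x y) (map_mul p _ _)

theorem continuous_toSemidirect (hE : IsCompatibleExtension ι p) :
    Continuous hE.toSemidirect :=
  hE.continuous_fiberDiff.prodMk (hE.p_cont.comp (continuous_fst.comp continuous_subtype_val))

end IsCompatibleExtension

theorem extension_inverse_class_general
    {G A S : Type*} [Group G] [TopologicalSpace G]
    [AddCommGroup A] [TopologicalSpace A]
    [DistribMulAction G A]
    [Group S] [TopologicalSpace S]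
    (ι : A → S) (p : S →* G) (hE : IsCompatibleExtension ι p) :
    -- unique `a(σ, τ)` with `ι (a(σ, τ)) = σ τ⁻¹`
    (∀ σ τ : S, p σ = p τ → ∃! a : A, ι a = σ * τ⁻¹) ∧
    -- `{(σ, τ) : p σ = p τ}` is a subgroup of `Σ × Σ` …
    ∃ T : Subgroup (S × S), (T : Set (S × S)) = {x : S × S | p x.1 = p x.2} ∧
      -- … and `h(σ, τ) = (a(σ, τ), p σ)` is a continuous homomorphism into `A ⋊ G`
      ∃ h : T → SDP A G (MonoidHom.id G),
        (∀ x : T, ι (h x).1 = (x : S × S).1 * ((x : S × S).2)⁻¹ ∧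
          (h x).2 = p (x : S × S).1) ∧
        Continuous h ∧
        (∀ x y : T, h (x * y) = h x * h y) ∧
        (∀ (a a' : A) (hmem : (ι a, ι (-a')) ∈ T),
          h ⟨(ι a, ι (-a')), hmem⟩ = SDP.mk (MonoidHom.id G) (a + a') 1) :=
  ⟨fun _ _ => hE.existsUnique_ι_eq_mul_inv, p.fiberProd, p.coe_fiberProd, hE.toSemidirect,
    fun x => ⟨hE.ι_fiberDiff x, rfl⟩, hE.continuous_toSemidirect, map_mul hE.toSemidirect,
    fun a a' h => Prod.ext (hE.fiberDiff_ι_ι_neg a a' h) (hE.p_ι a)⟩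

/-- (Inverses in the extension group; group case.)  Let
`(Σ, ι, p)` be a compatible extension of `G` by `A`.  For every pair
`(σ, τ)` with `p σ = p τ` there is a unique `a(σ, τ) ∈ A` with
`ι(a(σ, τ)) = σ·τ⁻¹`, and `h(σ, τ) = (a(σ, τ), p σ)` is a continuous group
homomorphism from `{(σ, τ) : p σ = p τ}` (componentwise operations, subspace
topology) to `A ⋊ G`.  Moreover `h(ι(a), ι(−a')) = (a + a', 1)` and the
`G`-component of `h(σ, τ)` is `p σ`.  (Thus `h` exhibits `A ⋊ G` as the
pushout of `Σ ×_G Σ⁻¹` along addition, so `[Σ] + [Σ⁻¹] = [SD(A, G)]`.) -/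
theorem extension_inverse_class
    {G A S : Type*} [Group G] [TopologicalSpace G] [IsTopologicalGroup G]
    [AddCommGroup A] [TopologicalSpace A] [IsTopologicalAddGroup A]
    [DistribMulAction G A] [ContinuousSMul G A]
    [Group S] [TopologicalSpace S] [IsTopologicalGroup S]
    (ι : A → S) (p : S →* G) (hE : IsCompatibleExtension ι p) :
    -- unique `a(σ, τ)` with `ι (a(σ, τ)) = σ τ⁻¹`
    (∀ σ τ : S, p σ = p τ → ∃! a : A, ι a = σ * τ⁻¹) ∧
    -- `{(σ, τ) : p σ = p τ}` is a subgroup of `Σ × Σ` …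
    ∃ T : Subgroup (S × S), (T : Set (S × S)) = {x : S × S | p x.1 = p x.2} ∧
      -- … and `h(σ, τ) = (a(σ, τ), p σ)` is a continuous homomorphism into `A ⋊ G`
      ∃ h : T → SDP A G (MonoidHom.id G),
        (∀ x : T, ι (h x).1 = (x : S × S).1 * ((x : S × S).2)⁻¹ ∧
          (h x).2 = p (x : S × S).1) ∧
        Continuous h ∧
        (∀ x y : T, h (x * y) = h x * h y) ∧
        (∀ (a a' : A) (hmem : (ι a, ι (-a')) ∈ T),
          h ⟨(ι a, ι (-a')), hmem⟩ = SDP.mk (MonoidHom.id G) (a + a') 1) :=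
  extension_inverse_class_general ι p hE
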